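/- arXiv:1302.2689 — 2 statements merged into one kernel-verified Lean document; each statement's English description precedes it below -/
import Mathlib

section
/- Consider a partitioned general linear method applied to a partitioned ODE system y' = f(y) with components y_{m}, m = 1,...,N, where each component is advanced by its own GLM (A_{m}, U_{m}, B_{m}, V_{m}) sharing the same abscissa vector c (internal consistency). If each component method has order p and stage order q ∈ {p-1, p}, and each f_{m} is Lipschitz continuous, and the input vectors satisfy y_{m,i}^{[n-1]} = Σ_{k=0}^p q_{m,i,k} hᵏ y_{m}^{(k)}(t_{n-1}) + O(h^{p+1}), then the stage values satisfy Y_{m,i} = y_{m}(t_{n-1} + c_i h) + O(h^{q+1}) and the outputs satisfy y_{m,i}^{[n]} = Σ_{k=0}^p q_{m,i,k} hᵏ y_{m}^{(k)}(t_n) + O(h^{p+1}) for all sufficiently small h. In particular no coupling order conditions between the component methods are required. -/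
open Asymptotics Filter Matrix Topology Finset

open scoped Nat

/-!
Insert the exact solution into one step of a component method: the resulting local defect
is a linear combination of `h ^ k • y⁽ᵏ⁾(t + c h)` and of the inputs, so by Taylor's theorem
its `k`-th Taylor coefficient at `h = 0` is `a_k • y⁽ᵏ⁾(t)`, where `a_k` is the `k`-th
Taylor coefficient of the same combination with `y` replaced by `exp` and `t` by `0`. That
scalar combination is exactly the one in the exponential order conditions, so `a_k = 0` for
`k ≤ q` (stages) and `k ≤ p` (outputs), and the defects are `O(h^{q+1})` and `O(h^{p+1})`.
The implicit stage equations then bound the stage errors by the stage defects for small `h`,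
because each `f_m` is Lipschitz in the full argument; in the outputs the stage errors enter
only multiplied by `h`, giving `O(h^{q+2}) ⊆ O(h^{p+1})` as `q + 1 ≥ p`. Every step is
componentwise, so no coupling conditions between the component methods arise.
-/

theorem isBigO_pow_pow_nhds_zero {m n : ℕ} (h : m ≤ n) :
    (fun x : ℝ => x ^ n) =O[𝓝 0] fun x => x ^ m := by
  rcases h.eq_or_lt with rfl | hlt
  · exact isBigO_refl _ _
  · exact (isLittleO_pow_pow hlt).isBigO

section

variable {E : Type*} [NormedAddCommGroup E] [NormedSpace ℝ E]

def HasPolyExpansion (n : ℕ) (F : ℝ → E) (a : ℕ → E) : Prop :=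
  (fun h => F h - ∑ k ∈ range (n + 1), h ^ k • a k) =O[𝓝 0] fun h => h ^ (n + 1)

namespace HasPolyExpansion

variable {n : ℕ} {F G : ℝ → E} {a b : ℕ → E}

theorem congr (hF : HasPolyExpansion n F a) (hFG : ∀ x, F x = G x)
    (hab : ∀ k ≤ n, a k = b k) : HasPolyExpansion n G b := by
  refine IsBigO.congr_left hF fun x => ?_
  rw [hFG, sum_congr rfl fun k hk => by rw [hab k (Nat.lt_succ_iff.mp (mem_range.mp hk))]]

theorem add (hF : HasPolyExpansion n F a) (hG : HasPolyExpansion n G b) :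
    HasPolyExpansion n (fun x => F x + G x) (a + b) := by
  refine (IsBigO.add hF hG).congr_left fun x => ?_
  simp only [Pi.add_apply, smul_add, sum_add_distrib]
  abel

theorem sub (hF : HasPolyExpansion n F a) (hG : HasPolyExpansion n G b) :
    HasPolyExpansion n (fun x => F x - G x) (a - b) := by
  refine (IsBigO.sub hF hG).congr_left fun x => ?_
  simp only [Pi.sub_apply, smul_sub, sum_sub_distrib]
  abel

theorem sum_smul {ι : Type*} (S : Finset ι) {F : ι → ℝ → E} {α : ι → ℕ → ℝ} {D : ℕ → E}
    (r : ι → ℝ) (h : ∀ j ∈ S, HasPolyExpansion n (F j) fun k => α j k • D k) :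
    HasPolyExpansion n (fun x => ∑ j ∈ S, r j • F j x) fun k => (∑ j ∈ S, r j * α j k) • D k := by
  refine (IsBigO.sum fun j hj => (h j hj).const_smul_left (r j)).congr_left fun x => ?_
  simp only [Finset.sum_apply, Pi.smul_apply, smul_sub, sum_sub_distrib, smul_sum,
    smul_comm (x ^ _)]
  rw [sum_comm]
  simp only [Finset.sum_smul, mul_smul]

theorem polynomial (a : ℕ → E) : HasPolyExpansion n (fun x => ∑ k ∈ range (n + 1), x ^ k • a k) a :=
  (isBigO_zero _ _).congr_left fun _ => (sub_self _).symm

theorem of_sub_sum_succ_isBigO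
    (hF : (fun h => F h - ∑ k ∈ range (n + 2), h ^ k • a k) =O[𝓝 0] fun h => h ^ (n + 1)) :
    HasPolyExpansion n F a := by
  have hlast : (fun h : ℝ => h ^ (n + 1) • a (n + 1)) =O[𝓝 0] fun h => h ^ (n + 1) :=
    .of_bound ‖a (n + 1)‖ <| .of_forall fun h => by rw [norm_smul, mul_comm]
  refine (hF.add hlast).congr_left fun x => ?_
  rw [sum_range_succ _ (n + 1)]
  abel

theorem of_succ (hF : HasPolyExpansion (n + 1) F a) : HasPolyExpansion n F a :=
  of_sub_sum_succ_isBigO (IsBigO.trans hF (isBigO_pow_pow_nhds_zero (Nat.le_succ _)))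

theorem mono {p : ℕ} (hF : HasPolyExpansion p F a) (hn : n ≤ p) : HasPolyExpansion n F a := by
  induction p, hn using Nat.le_induction with
  | base => exact hF
  | succ p _ ih => exact ih hF.of_succ

theorem pow_smul (hF : HasPolyExpansion n F a) (j : ℕ) :
    HasPolyExpansion (n + j) (fun h => h ^ j • F h) fun k => if k < j then 0 else a (k - j) := by
  have hfactor : ∀ h : ℝ,
      h ^ j • F h - ∑ k ∈ range (n + j + 1), h ^ k • (if k < j then 0 else a (k - j))
        = h ^ j • (F h - ∑ k ∈ range (n + 1), h ^ k • a k) := by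
    intro h
    rw [show n + j + 1 = j + (n + 1) by omega, sum_range_add, smul_sub, smul_sum,
      sum_eq_zero fun k hk => by rw [if_pos (mem_range.mp hk), smul_zero], zero_add]
    simp [pow_add, mul_smul]
  refine ((isBigO_refl (fun h : ℝ => h ^ j) _).smul (f' := fun h => F h - _) hF).congr
    (fun h => (hfactor h).symm) fun h => ?_
  rw [smul_eq_mul, ← pow_add, add_comm j, Nat.add_right_comm]

theorem isBigO_of_coeff_eq_zero (hF : HasPolyExpansion n F a) (ha : ∀ k ≤ n, a k = 0) :
    F =O[𝓝 0] fun h => h ^ (n + 1) :=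
  IsBigO.congr_left hF fun x => by
    rw [sum_eq_zero fun k hk => by rw [ha k (Nat.lt_succ_iff.mp (mem_range.mp hk)), smul_zero],
      sub_zero]

theorem eq_zero_of_pow_smul_isBigO {c : E}
    (h : (fun x : ℝ => x ^ n • c) =O[𝓝 0] fun x => x ^ (n + 1)) : c = 0 := by
  by_contra hc
  have hpow : (fun x : ℝ => x ^ n) =O[𝓝 0] fun x => x ^ (n + 1) :=
    IsBigO.trans (.of_bound ‖c‖⁻¹ <| .of_forall fun x => by
      rw [norm_smul, mul_comm ‖x ^ n‖, inv_mul_cancel_left₀ (norm_ne_zero_iff.mpr hc)]) h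
  have hfreq : ∃ᶠ x in 𝓝 (0 : ℝ), x ^ (n + 1) ≠ 0 :=
    ((eventually_mem_nhdsWithin (a := (0 : ℝ)) (s := {0}ᶜ)).mono
      fun x hx => pow_ne_zero _ hx).frequently.filter_mono nhdsWithin_le_nhds
  exact (isLittleO_pow_pow (Nat.lt_succ_self n)).not_isBigO hfreq hpow

theorem coeff_eq_zero_of_sum_isBigO :
    ∀ {n : ℕ}, (fun x : ℝ => ∑ k ∈ range n, x ^ k • a k) =O[𝓝 0] (fun x => x ^ n) →
      ∀ k < n, a k = 0
  | 0, _, _, hk => absurd hk (Nat.not_lt_zero _)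
  | n + 1, hO, k, hk => by
    have hlow : (fun x : ℝ => ∑ k ∈ range n, x ^ k • a k) =O[𝓝 0] fun x => x ^ n := by
      have hlast : (fun x : ℝ => x ^ n • a n) =O[𝓝 0] fun x => x ^ n :=
        .of_bound ‖a n‖ <| .of_forall fun x => by rw [norm_smul, mul_comm]
      refine ((hO.trans (isBigO_pow_pow_nhds_zero (Nat.le_succ n))).sub hlast).congr_left
        fun x => ?_
      rw [sum_range_succ, add_sub_cancel_right]
    have ih := coeff_eq_zero_of_sum_isBigO hlow
    have han : a n = 0 := eq_zero_of_pow_smul_isBigO <| hO.congr_left fun x => by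
      rw [sum_range_succ, sum_eq_zero fun k hk => by rw [ih k (mem_range.mp hk), smul_zero],
        zero_add]
    rcases Nat.lt_succ_iff_lt_or_eq.mp hk with hk | rfl
    · exact ih k hk
    · exact han

theorem coeff_eq_zero_of_isBigO (hF : HasPolyExpansion n F a)
    (hO : F =O[𝓝 0] fun h => h ^ (n + 1)) : ∀ k ≤ n, a k = 0 := fun k hk =>
  coeff_eq_zero_of_sum_isBigO ((hO.sub hF).congr_left fun _ => sub_sub_cancel _ _) k
    (Nat.lt_succ_of_le hk)

end HasPolyExpansion

theorem ContDiff.hasPolyExpansion_comp_add_mul {g : ℝ → E} {n : ℕ} (hg : ContDiff ℝ (n + 1) g)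
    (t c : ℝ) :
    HasPolyExpansion n (fun h => g (t + c * h)) fun k => (c ^ k / k !) • iteratedDeriv k g t := by
  have hlim : Tendsto (fun h : ℝ => t + c * h) (𝓝 0) (𝓝 t) := by
    simpa using (tendsto_const_nhds (x := t)).add ((tendsto_id (x := 𝓝 (0:ℝ))).const_mul c)
  have hTaylor := (taylor_isLittleO_univ (x₀ := t) (n := n + 1)
    (by exact_mod_cast hg)).isBigO.comp_tendsto hlim
  have hscale : (fun h : ℝ => (t + c * h - t) ^ (n + 1)) =O[𝓝 0] fun h => h ^ (n + 1) :=
    (isBigO_refl _ _).const_mul_left (c ^ (n + 1)) |>.congr_left fun h => by ring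
  refine HasPolyExpansion.of_sub_sum_succ_isBigO ((hTaylor.trans hscale).congr_left fun h => ?_)
  simp only [Function.comp_apply, taylor_within_apply, iteratedDerivWithin_univ]
  congr 1
  refine sum_congr rfl fun k _ => ?_
  rw [add_sub_cancel_left, smul_smul]
  congr 1
  ring

noncomputable def powMulExpCoeff (k : ℕ) (c : ℝ) (n : ℕ) : ℝ :=
  if k ≤ n then c ^ (n - k) / (n - k)! else 0

theorem ContDiff.hasPolyExpansion_pow_smul_iteratedDeriv {g : ℝ → E} {p k : ℕ}
    (hg : ContDiff ℝ (p + 1) g) (hk : k ≤ p) (t c : ℝ) :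
    HasPolyExpansion p (fun h => h ^ k • iteratedDeriv k g (t + c * h))
      fun n => powMulExpCoeff k c n • iteratedDeriv n g t := by
  have hgk : ContDiff ℝ (↑(p - k) + 1) (iteratedDeriv k g) := by
    rw [iteratedDeriv_eq_iterate]
    exact_mod_cast ContDiff.iterate_deriv' (p - k + 1) k
      (by rw [show p - k + 1 + k = p + 1 by omega]; exact_mod_cast hg)
  have H := (hgk.hasPolyExpansion_comp_add_mul t c).pow_smul k
  rw [Nat.sub_add_cancel hk] at H
  refine H.congr (fun _ => rfl) fun n _ => ?_
  unfold powMulExpCoeff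
  split_ifs with hnk hkn hkn
  · omega
  · simp
  · simp only [iteratedDeriv_eq_iterate]
    rw [← Function.iterate_add_apply, Nat.sub_add_cancel hkn]
  · omega

theorem hasPolyExpansion_pow_mul_exp {p k : ℕ} (hk : k ≤ p) (c : ℝ) :
    HasPolyExpansion p (fun z => z ^ k * Real.exp (c * z)) (powMulExpCoeff k c) :=
  (Real.contDiff_exp.hasPolyExpansion_pow_smul_iteratedDeriv hk 0 c).congr
    (fun z => by simp [iteratedDeriv_eq_iterate, Real.iter_deriv_exp])
    fun n _ => by simp [iteratedDeriv_eq_iterate, Real.iter_deriv_exp]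

section GeneralLinearMethod

variable {ι κ ρ : Type*} [Fintype ι] [Fintype κ] [Fintype ρ]

/-- `T₀` is the target `T` with `g = exp` and `t = 0`, so `horder` is the defect of this
`exp` model. -/
theorem glm_defect_isBigO {p n : ℕ} (hp : 0 < p) (hn : n ≤ p)
    (A : Matrix ρ ι ℝ) (U : Matrix ρ κ ℝ) (c : ι → ℝ) (qw : ℕ → κ → ℝ)
    {T₀ : ℝ → ρ → ℝ} {τ : ℕ → ρ → ℝ} (hT₀ : ∀ i, HasPolyExpansion p (T₀ · i) (τ · i))
    (horder : (fun z : ℝ => T₀ z - (z • A *ᵥ (fun j => Real.exp (c j * z)) +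
        U *ᵥ ∑ k ∈ range (p + 1), z ^ k • qw k)) =O[𝓝 0] fun z => z ^ (n + 1))
    {g : ℝ → E} (hg : ContDiff ℝ (p + 1) g) (t : ℝ)
    {T : ℝ → ρ → E} (hT : ∀ i, HasPolyExpansion p (T · i) fun k => τ k i • iteratedDeriv k g t)
    {w : ℝ → κ → E} (hw : ∀ j, HasPolyExpansion p (w · j) fun k => qw k j • iteratedDeriv k g t)
    (i : ρ) :
    (fun h => T h i - (∑ j, (h * A i j) • deriv g (t + c j * h) + ∑ j, U i j • w h j))
      =O[𝓝 0] fun h => h ^ (n + 1) := by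
  set a : ℕ → ℝ := fun k =>
    τ k i - (∑ j, A i j * powMulExpCoeff 1 (c j) k + ∑ j, U i j * qw k j) with ha
  have hscalar : HasPolyExpansion p (fun z => (T₀ z - (z • A *ᵥ (fun j => Real.exp (c j * z)) +
      U *ᵥ ∑ k ∈ range (p + 1), z ^ k • qw k)) i) a := by
    have hA := HasPolyExpansion.sum_smul univ (A i) (D := fun _ => (1 : ℝ))
      fun j _ => (hasPolyExpansion_pow_mul_exp hp (c j)).congr (fun _ => rfl)
        fun k _ => (mul_one _).symm
    have hU := HasPolyExpansion.sum_smul univ (U i) (D := fun _ => (1 : ℝ))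
      fun j _ => (HasPolyExpansion.polynomial (n := p) (qw · j)).congr (fun _ => rfl)
        fun k _ => (mul_one _).symm
    refine ((hT₀ i).sub (hA.add hU)).congr (fun z => ?_) fun k _ => ?_
    · simp [mulVec, dotProduct, mul_sum, Finset.sum_apply, mul_left_comm z]
    · simp [ha]
  have hvec : HasPolyExpansion p
      (fun h => T h i - (∑ j, (h * A i j) • deriv g (t + c j * h) + ∑ j, U i j • w h j))
      fun k => a k • iteratedDeriv k g t := by
    have hA := HasPolyExpansion.sum_smul univ (A i)
      fun j _ => hg.hasPolyExpansion_pow_smul_iteratedDeriv hp t (c j)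
    have hU := HasPolyExpansion.sum_smul univ (U i) fun j _ => hw j
    refine ((hT i).sub (hA.add hU)).congr (fun h => ?_) fun k _ => ?_
    · simp [iteratedDeriv_one, mul_smul, smul_comm h]
    · simp only [ha, Pi.sub_apply, Pi.add_apply, sub_smul, add_smul]
  have hcoeff : ∀ k ≤ n, a k = 0 :=
    (hscalar.mono hn).coeff_eq_zero_of_isBigO (isBigO_pi.mp horder i)
  exact (hvec.mono hn).isBigO_of_coeff_eq_zero fun k hk => by rw [hcoeff k hk, zero_smul]

theorem glm_stage_defect_isBigO {p q : ℕ} (hp : 0 < p) (hqp : q ≤ p)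
    (A : Matrix ι ι ℝ) (U : Matrix ι κ ℝ) (c : ι → ℝ) (qw : ℕ → κ → ℝ)
    (hstageOrder : (fun z : ℝ => (fun i => Real.exp (c i * z)) -
        (z • A *ᵥ (fun i => Real.exp (c i * z)) + U *ᵥ ∑ k ∈ range (p + 1), z ^ k • qw k))
      =O[𝓝 0] fun z => z ^ (q + 1))
    {g : ℝ → E} (hg : ContDiff ℝ (p + 1) g) (t : ℝ)
    {w : ℝ → κ → E} (hw : ∀ j, HasPolyExpansion p (w · j) fun k => qw k j • iteratedDeriv k g t)
    (i : ι) :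
    (fun h => g (t + c i * h) - (∑ j, (h * A i j) • deriv g (t + c j * h) + ∑ j, U i j • w h j))
      =O[𝓝 0] fun h => h ^ (q + 1) :=
  glm_defect_isBigO hp hqp A U c qw (τ := fun k i => powMulExpCoeff 0 (c i) k)
    (T := fun h i => g (t + c i * h))
    (fun i => (hasPolyExpansion_pow_mul_exp p.zero_le (c i)).congr (by simp) fun _ _ => rfl)
    hstageOrder hg t
    (fun i => (hg.hasPolyExpansion_pow_smul_iteratedDeriv p.zero_le t (c i)).congr (by simp)
      fun _ _ => rfl)
    hw i

theorem glm_output_defect_isBigO {p : ℕ} (hp : 0 < p)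
    (B : Matrix κ ι ℝ) (V : Matrix κ κ ℝ) (c : ι → ℝ) (qw : ℕ → κ → ℝ)
    (horder : (fun z : ℝ => Real.exp z • (∑ k ∈ range (p + 1), z ^ k • qw k) -
        (z • B *ᵥ (fun i => Real.exp (c i * z)) + V *ᵥ ∑ k ∈ range (p + 1), z ^ k • qw k))
      =O[𝓝 0] fun z => z ^ (p + 1))
    {g : ℝ → E} (hg : ContDiff ℝ (p + 1) g) (t : ℝ)
    {w : ℝ → κ → E} (hw : ∀ j, HasPolyExpansion p (w · j) fun k => qw k j • iteratedDeriv k g t)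
    (i : κ) :
    (fun h => ∑ k ∈ range (p + 1), (qw k i * h ^ k) • iteratedDeriv k g (t + h) -
        (∑ j, (h * B i j) • deriv g (t + c j * h) + ∑ j, V i j • w h j))
      =O[𝓝 0] fun h => h ^ (p + 1) := by
  refine glm_defect_isBigO hp le_rfl B V c qw
    (τ := fun n i => ∑ k ∈ range (p + 1), qw k i * powMulExpCoeff k 1 n)
    (T := fun h i => ∑ k ∈ range (p + 1), (qw k i * h ^ k) • iteratedDeriv k g (t + h))
    (fun i => ?_) horder hg t (fun i => ?_) hw i
  · refine (HasPolyExpansion.sum_smul (range (p + 1)) (qw · i) (D := fun _ => (1 : ℝ))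
      fun k hk => (hasPolyExpansion_pow_mul_exp (Nat.lt_succ_iff.mp (mem_range.mp hk)) 1).congr
        (fun _ => rfl) fun _ _ => (mul_one _).symm).congr (fun z => ?_) fun _ _ => mul_one _
    simp only [Pi.smul_apply, Finset.sum_apply, smul_eq_mul, one_mul, mul_sum]
    exact sum_congr rfl fun k _ => by ring
  · refine (HasPolyExpansion.sum_smul (range (p + 1)) (qw · i)
      fun k hk => hg.hasPolyExpansion_pow_smul_iteratedDeriv
        (Nat.lt_succ_iff.mp (mem_range.mp hk)) t 1).congr (fun h => ?_) fun _ _ => rfl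
    simp [mul_smul]

end GeneralLinearMethod

end

theorem isBigO_of_norm_le_mul_norm_add {α X X' : Type*} [SeminormedAddCommGroup X]
    [SeminormedAddCommGroup X'] {l : Filter α} {e : α → X} {δ : α → X'} {ε : α → ℝ}
    (hε : Tendsto ε l (𝓝 0)) (h : ∀ᶠ x in l, ‖e x‖ ≤ ε x * ‖e x‖ + ‖δ x‖) : e =O[l] δ :=
  .of_bound 2 <| (h.and (hε.eventually (gt_mem_nhds one_half_pos))).mono fun x ⟨hx, hεx⟩ => by
    nlinarith [norm_nonneg (e x)]

section Partitioned

variable {M ι : Type*} [Fintype M] [Fintype ι] {F : M → Type*}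
  [∀ m, NormedAddCommGroup (F m)] [∀ m, NormedSpace ℝ (F m)]

theorem stage_sub_isBigO_defect {f : (m : M) → ((m' : M) → F m') → F m} {L : M → NNReal}
    (hf : ∀ m, LipschitzWith (L m) (f m)) (A : M → Matrix ι ι ℝ) {Y Z R : ℝ → ι → (m : M) → F m}
    (hY : ∀ᶠ h in 𝓝 0, ∀ m i, Y h i m = ∑ j, (h * A m i j) • f m (Y h j) + R h i m) :
    (fun h => Y h - Z h) =O[𝓝 0]
      fun h i m => Z h i m - (∑ j, (h * A m i j) • f m (Z h j) + R h i m) := by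
  set Λ := ∑ mi : M × ι, (L mi.1 : ℝ) * ∑ j, |A mi.1 mi.2 j|
  have hΛ : ∀ mi : M × ι, (L mi.1 : ℝ) * ∑ j, |A mi.1 mi.2 j| ≤ Λ := fun mi =>
    single_le_sum (f := fun mi : M × ι => (L mi.1 : ℝ) * ∑ j, |A mi.1 mi.2 j|)
      (fun _ _ => by positivity) (mem_univ mi)
  have hε : Tendsto (fun h : ℝ => |h| * Λ) (𝓝 0) (𝓝 0) := by
    simpa using (continuous_abs.tendsto (0 : ℝ)).mul_const Λ
  refine isBigO_of_norm_le_mul_norm_add hε (hY.mono fun h hYh => ?_)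
  set e := Y h - Z h
  set δ : ι → (m : M) → F m := fun i m => Z h i m - (∑ j, (h * A m i j) • f m (Z h j) + R h i m)
  have hnonneg : 0 ≤ |h| * Λ * ‖e‖ + ‖δ‖ := by positivity
  refine (pi_norm_le_iff_of_nonneg hnonneg).mpr fun i => (pi_norm_le_iff_of_nonneg hnonneg).mpr
    fun m => ?_
  have herr : e i m = ∑ j, (h * A m i j) • (f m (Y h j) - f m (Z h j)) - δ i m := by
    simp only [e, δ, Pi.sub_apply, hYh m i, smul_sub, sum_sub_distrib]
    abel
  calc ‖e i m‖ ≤ ∑ j, ‖(h * A m i j) • (f m (Y h j) - f m (Z h j))‖ + ‖δ i m‖ := by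
        rw [herr]; exact (norm_sub_le _ _).trans (by gcongr; exact norm_sum_le _ _)
    _ ≤ ∑ j, |h| * |A m i j| * (L m * ‖e‖) + ‖δ‖ := by
        gcongr with j
        · rw [norm_smul, Real.norm_eq_abs, abs_mul]
          gcongr
          exact ((hf m).norm_sub_le _ _).trans (by gcongr; exact norm_le_pi_norm e j)
        · exact (norm_le_pi_norm (δ i) m).trans (norm_le_pi_norm δ i)
    _ = |h| * (L m * ∑ j, |A m i j|) * ‖e‖ + ‖δ‖ := by
        rw [mul_sum, mul_sum, sum_mul]; congr 1; exact sum_congr rfl fun j _ => by ring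
    _ ≤ |h| * Λ * ‖e‖ + ‖δ‖ := by gcongr; exact hΛ (m, i)

end Partitioned

theorem LipschitzWith.sum_smul_sub_isBigO {ι X X' : Type*} [Fintype ι] [SeminormedAddCommGroup X]
    [NormedAddCommGroup X'] [NormedSpace ℝ X'] {f : X → X'} {L : NNReal}
    (hf : LipschitzWith L f) (b : ι → ℝ) {Y Z : ℝ → ι → X} {K : ℕ}
    (hYZ : (fun h => Y h - Z h) =O[𝓝 0] fun h => h ^ K) :
    (fun h => ∑ j, (h * b j) • (f (Y h j) - f (Z h j))) =O[𝓝 0] fun h => h ^ (K + 1) := by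
  refine IsBigO.fun_sum fun j _ => ?_
  have hb : (fun h : ℝ => h * b j) =O[𝓝 0] fun h => h :=
    .of_bound |b j| <| .of_forall fun h => by rw [norm_mul, Real.norm_eq_abs (b j), mul_comm]
  have hfj : (fun h => f (Y h j) - f (Z h j)) =O[𝓝 0] fun h => h ^ K :=
    IsBigO.trans (.of_bound L <| .of_forall fun h =>
      (hf.norm_sub_le _ _).trans (by gcongr; exact norm_le_pi_norm (Y h - Z h) j) :
        (fun h => f (Y h j) - f (Z h j)) =O[𝓝 0] fun h => Y h - Z h) hYZ
  exact (hb.smul hfj).congr_right fun h => by rw [smul_eq_mul, pow_succ']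

/-- Order conditions theorem for internally consistent partitioned GLMs:
if each component method `(A_m, U_m, B_m, V_m)` (sharing the same abscissae
`c`) has order `p` and stage order `q ∈ {p-1, p}` (expressed via the
exponential order conditions), each `f_m` is Lipschitz, and the inputs carry
the correct derivative information up to `O(h^{p+1})`, then the internal
stages are accurate to `O(h^{q+1})` and the outputs to `O(h^{p+1})`;
no coupling order conditions between the component methods are required. -/
theorem stmt4
    (N s r p q : ℕ) (hq : q = p ∨ q + 1 = p) (hp : 0 < p)
    (d : Fin N → ℕ)
    (f : (m : Fin N) → ((m' : Fin N) → EuclideanSpace ℝ (Fin (d m'))) →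
      EuclideanSpace ℝ (Fin (d m)))
    (L : Fin N → NNReal) (hf : ∀ m, LipschitzWith (L m) (f m))
    (A : Fin N → Matrix (Fin s) (Fin s) ℝ) (U : Fin N → Matrix (Fin s) (Fin r) ℝ)
    (B : Fin N → Matrix (Fin r) (Fin s) ℝ) (V : Fin N → Matrix (Fin r) (Fin r) ℝ)
    (c : Fin s → ℝ) (qw : Fin N → ℕ → Fin r → ℝ)
    -- each component method has stage order `q` …
    (hstageOrder : ∀ m,
      (fun z : ℝ =>
          (fun i => Real.exp (c i * z)) -
            (z • (A m).mulVec (fun i => Real.exp (c i * z)) +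
              (U m).mulVec (∑ j ∈ Finset.range (p + 1), z ^ j • qw m j)))
        =O[𝓝 0] fun z : ℝ => z ^ (q + 1))
    -- … and order `p`
    (horder : ∀ m,
      (fun z : ℝ =>
          Real.exp z • (∑ j ∈ Finset.range (p + 1), z ^ j • qw m j) -
            (z • (B m).mulVec (fun i => Real.exp (c i * z)) +
              (V m).mulVec (∑ j ∈ Finset.range (p + 1), z ^ j • qw m j)))
        =O[𝓝 0] fun z : ℝ => z ^ (p + 1))
    -- the exact solution of the partitioned system `y' = f(y)`
    (y : ℝ → (m : Fin N) → EuclideanSpace ℝ (Fin (d m)))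
    (hy : ∀ t m, HasDerivAt (fun t' => y t' m) (f m (y t)) t)
    (hysmooth : ∀ m, ContDiff ℝ (p + 1) fun t => y t m)
    (t : ℝ)
    -- one step of the partitioned GLM, from `t` with step size `h`
    (Y : ℝ → Fin s → (m : Fin N) → EuclideanSpace ℝ (Fin (d m)))
    (yin yout : ℝ → Fin r → (m : Fin N) → EuclideanSpace ℝ (Fin (d m)))
    (hin : ∀ m i,
      (fun h : ℝ => yin h i m -
          ∑ k ∈ Finset.range (p + 1),
            (qw m k i * h ^ k) • iteratedDeriv k (fun t' => y t' m) t)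
        =O[𝓝 0] fun h : ℝ => h ^ (p + 1))
    (hstageEq : ∀ᶠ h : ℝ in 𝓝 0, ∀ m i,
      Y h i m = (∑ j, (h * A m i j) • f m (Y h j)) + ∑ j, U m i j • yin h j m)
    (houtEq : ∀ (h : ℝ) (m : Fin N) (i : Fin r),
      yout h i m = (∑ j, (h * B m i j) • f m (Y h j)) + ∑ j, V m i j • yin h j m) :
    (∀ m i, (fun h : ℝ => Y h i m - y (t + c i * h) m) =O[𝓝 0] fun h : ℝ => h ^ (q + 1)) ∧
    (∀ m i,
      (fun h : ℝ => yout h i m -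
          ∑ k ∈ Finset.range (p + 1),
            (qw m k i * h ^ k) • iteratedDeriv k (fun t' => y t' m) (t + h))
        =O[𝓝 0] fun h : ℝ => h ^ (p + 1)) := by
  have hqp : q ≤ p := by omega
  have hderiv : ∀ m x, deriv (fun t' => y t' m) x = f m (y x) := fun m x => (hy x m).deriv
  have hw : ∀ m j, HasPolyExpansion p (fun h => yin h j m)
      fun k => qw m k j • iteratedDeriv k (fun t' => y t' m) t := fun m j =>
    (hin m j).congr_left fun h => by simp only [mul_comm (qw m _ j), mul_smul]
  have hstage : (fun h => Y h - fun i m => y (t + c i * h) m) =O[𝓝 0] fun h => h ^ (q + 1) := by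
    refine (stage_sub_isBigO_defect hf A hstageEq).trans
      (isBigO_pi.2 fun i => isBigO_pi.2 fun m => ?_)
    simpa only [hderiv] using
      glm_stage_defect_isBigO hp hqp (A m) (U m) c (qw m) (hstageOrder m) (hysmooth m) t (hw m) i
  refine ⟨fun m i => isBigO_pi.1 (isBigO_pi.1 hstage i) m, fun m i => ?_⟩
  have hcoupling := ((hf m).sum_smul_sub_isBigO (B m i) hstage).trans
    (isBigO_pow_pow_nhds_zero (show p + 1 ≤ q + 1 + 1 by omega))
  have houtput :=
    glm_output_defect_isBigO hp (B m) (V m) c (qw m) (horder m) (hysmooth m) t (hw m) i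
  simp only [hderiv] at houtput
  refine (hcoupling.sub houtput).congr_left fun h => ?_
  simp only [houtEq, smul_sub, sum_sub_distrib]
  abel
end

section
/- Apply the IMEX-GLM method with U = I to the Prothero–Robinson problem y' = μ(y − φ(t)) + φ'(t), μ < 0, y(0) = φ(0). With stage errors E^{[n]} = Y^{[n]} − φ(t_{n-1} + ch) and total external error e_n = y^{[n]} − Σ_k q_k hᵏ φ^{(k)}(t_n), the stage equation yields (I − hμÂ) E^{[n]} = e_{n-1} + Σ_{k≥1} (k A c^{k-1} + k! q_k − c^k) (hᵏ/k!) φ^{(k)}(t_{n-1}), where the series remainder is O(h^{q+1}) if the explicit method has stage order q (i.e., k A c^{k-1} + k! q_k − c^k = 0 for k = 1,...,q). -/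
open Asymptotics Filter Matrix Topology Finset

lemma my_comp_affine (φ : ℝ → ℝ) (hφ : ContDiff ℝ (⊤:ℕ∞) φ) (t c : ℝ) (n : ℕ) :
    iteratedDeriv n (fun h : ℝ => φ (t + c * h)) 0 = c ^ n * iteratedDeriv n φ t := by
  have hg : ContDiff ℝ (⊤:ℕ∞) (fun x : ℝ => φ (t + x)) := hφ.comp (contDiff_const.add contDiff_id)
  have h1 : (fun h : ℝ => φ (t + c * h)) = fun h => (fun x => φ (t + x)) (c * h) := rfl
  rw [h1, iteratedDeriv_comp_const_mul (n := n) (hg.of_le (by exact_mod_cast le_top)) c]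
  rw [iteratedDeriv_comp_const_add n φ t]
  norm_num

lemma my_iteratedDeriv_add {n : ℕ} {f g : ℝ → ℝ} (hf : ContDiff ℝ (n:ℕ∞) f)
    (hg : ContDiff ℝ (n:ℕ∞) g) (x : ℝ) :
    iteratedDeriv n (fun h => f h + g h) x = iteratedDeriv n f x + iteratedDeriv n g x := by
  simp only [← iteratedDerivWithin_univ]
  exact iteratedDerivWithin_add (Set.mem_univ x) uniqueDiffOn_univ hf.contDiffAt.contDiffWithinAt hg.contDiffAt.contDiffWithinAt

lemma my_iteratedDeriv_sum {ι : Type*} (u : Finset ι) (f : ι → ℝ → ℝ)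
    (hf : ∀ i ∈ u, ContDiff ℝ (⊤:ℕ∞) (f i)) (n : ℕ) (x : ℝ) :
    iteratedDeriv n (fun h => ∑ i ∈ u, f i h) x = ∑ i ∈ u, iteratedDeriv n (f i) x := by
  classical
  induction u using Finset.induction with
  | empty =>
    simp only [Finset.sum_empty]
    rw [iteratedDeriv_eq_iterate, Function.iterate_fixed (by simp) n]
  | insert a u' hnot ih =>
    rw [Finset.sum_insert hnot]
    have : (fun h => ∑ i ∈ insert a u', f i h) = fun h => f a h + ∑ i ∈ u', f i h := by
      funext h; rw [Finset.sum_insert hnot]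
    rw [this, my_iteratedDeriv_add ((hf a (Finset.mem_insert_self a u')).of_le (by exact_mod_cast le_top))
      (by
        have : ContDiff ℝ (⊤:ℕ∞) (fun h => ∑ i ∈ u', f i h) := by
          apply ContDiff.sum; intro i hi; exact hf i (Finset.mem_insert_of_mem hi)
        exact this.of_le (by exact_mod_cast le_top)),
      ih (fun i hi => hf i (Finset.mem_insert_of_mem hi))]

lemma my_iteratedDeriv_pow (k : ℕ) : ∀ (m : ℕ),
    iteratedDeriv m (fun h : ℝ => h ^ k) = fun h => (k.descFactorial m : ℝ) * h ^ (k - m) := by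
  intro m
  induction m with
  | zero => simp
  | succ m ih =>
    rw [iteratedDeriv_succ, ih]
    funext x
    rw [deriv_const_mul _ (differentiableAt_pow _), deriv_pow_field]
    rw [Nat.descFactorial_succ]
    push_cast
    rw [Nat.sub_sub]
    ring

lemma my_mul_id {f : ℝ → ℝ} (hf : ContDiff ℝ (⊤:ℕ∞) f) : ∀ (m : ℕ),
    iteratedDeriv (m+1) (fun h => h * f h) =
      fun x => (m+1 : ℝ) * iteratedDeriv m f x + x * iteratedDeriv (m+1) f x := by
  have hdiff : ∀ k : ℕ, Differentiable ℝ (iteratedDeriv k f) := by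
    intro k
    exact hf.differentiable_iteratedDeriv k (by exact_mod_cast lt_top_iff_ne_top.2 (by simp))
  intro m
  induction m with
  | zero =>
    funext x
    rw [iteratedDeriv_one]
    rw [deriv_fun_mul differentiableAt_fun_id (hf.differentiable (by simp) x)]
    simp [iteratedDeriv_one]
  | succ m ih =>
    funext x
    rw [iteratedDeriv_succ, ih]
    have h1 : DifferentiableAt ℝ (fun x : ℝ => (m+1 : ℝ) * iteratedDeriv m f x) x :=
      ((hdiff m) x).const_mul _
    have h2 : DifferentiableAt ℝ (fun x : ℝ => x * iteratedDeriv (m+1) f x) x :=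
      differentiableAt_fun_id.mul ((hdiff (m+1)) x)
    rw [deriv_fun_add h1 h2, deriv_const_mul _ ((hdiff m) x),
      deriv_fun_mul differentiableAt_fun_id ((hdiff (m+1)) x)]
    have hds : deriv (iteratedDeriv (m+1) f) x = iteratedDeriv (m+1+1) f x :=
      congrFun (iteratedDeriv_succ).symm x
    have hds2 : deriv (iteratedDeriv m f) x = iteratedDeriv (m+1) f x :=
      congrFun (iteratedDeriv_succ).symm x
    simp only [hds, hds2, deriv_id'']
    push_cast
    ring

lemma my_vanishing_isBigO : ∀ (n : ℕ) (g : ℝ → ℝ), ContDiff ℝ (⊤:ℕ∞) g →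
    (∀ k ≤ n, iteratedDeriv k g 0 = 0) → g =O[𝓝 (0:ℝ)] fun h => h ^ (n+1) := by
  intro n
  induction n with
  | zero =>
    intro g hg hvan
    have h0 : g 0 = 0 := by simpa using hvan 0 le_rfl
    have hd : DifferentiableAt ℝ g 0 := (hg.differentiable (by simp)) 0
    have := hd.isBigO_sub
    simp only [h0, sub_zero] at this
    simpa [pow_one] using this
  | succ n ih =>
    intro g hg hvan
    have h0 : g 0 = 0 := by simpa using hvan 0 (Nat.zero_le _)
    have hg' : ContDiff ℝ (⊤:ℕ∞) (deriv g) := (contDiff_infty_iff_deriv.mp hg).2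
    have hvan' : ∀ k ≤ n, iteratedDeriv k (deriv g) 0 = 0 := by
      intro k hk
      have : iteratedDeriv (k+1) g 0 = 0 := hvan (k+1) (Nat.succ_le_succ hk)
      rwa [iteratedDeriv_succ'] at this
    have hO : deriv g =O[𝓝 (0:ℝ)] fun h => h ^ (n+1) := ih (deriv g) hg' hvan'
    obtain ⟨C, hC, hbound⟩ := hO.exists_pos
    rw [IsBigOWith] at hbound
    rw [Metric.eventually_nhds_iff] at hbound
    obtain ⟨ε, hε, hb⟩ := hbound
    rw [isBigO_iff]
    refine ⟨C, Metric.eventually_nhds_iff.mpr ⟨ε, hε, ?_⟩⟩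
    intro h hh
    simp only [Real.dist_eq, sub_zero] at hh
    have key : ‖g h - g 0‖ ≤ (C * |h| ^ (n+1)) * ‖h - 0‖ := by
      apply Convex.norm_image_sub_le_of_norm_deriv_le
        (f := g) (s := Set.uIcc (0:ℝ) h)
      · intro x _; exact (hg.differentiable (by simp)) x
      · intro x hx
        have hxh : |x| ≤ |h| := by
          rw [Set.mem_uIcc] at hx
          rcases hx with ⟨h1, h2⟩ | ⟨h1, h2⟩ <;> rw [abs_le] <;>
            constructor <;> nlinarith [abs_nonneg h, le_abs_self h, neg_abs_le h]
        have := hb (y := x) (by simp [Real.dist_eq]; linarith [abs_le.1 hxh, abs_nonneg h])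
        calc ‖deriv g x‖ ≤ C * ‖x ^ (n+1)‖ := this
          _ ≤ C * |h| ^ (n+1) := by
              rw [Real.norm_eq_abs, abs_pow]
              exact mul_le_mul_of_nonneg_left (pow_le_pow_left₀ (abs_nonneg x) hxh _) hC.le
      · exact convex_uIcc _ _
      · exact Set.left_mem_uIcc
      · exact Set.right_mem_uIcc
    rw [h0, sub_zero, sub_zero] at key
    calc ‖g h‖ ≤ C * |h| ^ (n+1) * ‖h‖ := key
      _ = C * ‖h ^ (n+1+1)‖ := by
          rw [Real.norm_eq_abs, Real.norm_eq_abs, abs_pow]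
          ring

lemma my_iteratedDeriv_const_mul' {n : ℕ} {f : ℝ → ℝ} (hf : ContDiff ℝ (⊤:ℕ∞) f) (a x : ℝ) :
    iteratedDeriv n (fun h => a * f h) x = a * iteratedDeriv n f x := by
  simp only [← iteratedDerivWithin_univ]
  exact iteratedDerivWithin_const_mul_field a f

theorem stmt11' (s p q : ℕ) (hqp : q ≤ p)
    (A : Matrix (Fin s) (Fin s) ℝ) (c : Fin s → ℝ) (qw : ℕ → Fin s → ℝ)
    (φ : ℝ → ℝ) (hφ : ContDiff ℝ (⊤ : ℕ∞) φ)
    (hq0 : qw 0 = fun _ => (1 : ℝ))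
    (hstageord : ∀ k, 1 ≤ k → k ≤ q → ∀ i,
      (k : ℝ) * A.mulVec (fun j => c j ^ (k - 1)) i +
        (Nat.factorial k : ℝ) * qw k i - c i ^ k = 0)
    (t : ℝ) :
    (fun h : ℝ => fun i : Fin s =>
        h * A.mulVec (fun j => deriv φ (t + c j * h)) i +
          (∑ k ∈ Finset.range (p + 1), qw k i * h ^ k * iteratedDeriv k φ t) -
          φ (t + c i * h))
      =O[𝓝 0] fun h : ℝ => h ^ (q + 1) := by
  have hφ' : ContDiff ℝ (⊤:ℕ∞) φ := hφ.of_le (by simp)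
  have hdφ : ContDiff ℝ (⊤:ℕ∞) (deriv φ) := (contDiff_infty_iff_deriv.mp hφ').2
  refine isBigO_pi.mpr fun i => ?_
  -- rewrite the i-th component in a structured form
  have hrepr : (fun h : ℝ =>
      (fun i : Fin s =>
        h * A.mulVec (fun j => deriv φ (t + c j * h)) i +
          (∑ k ∈ Finset.range (p + 1), qw k i * h ^ k * iteratedDeriv k φ t) -
          φ (t + c i * h)) i) =
      fun h : ℝ =>
        (∑ j, (fun h : ℝ => A i j * (h * deriv φ (t + c j * h))) h) +
        (∑ k ∈ Finset.range (p + 1),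
          (fun h : ℝ => (qw k i * iteratedDeriv k φ t) * h ^ k) h) +
        (fun h : ℝ => -φ (t + c i * h)) h := by
    funext h
    simp only [Matrix.mulVec, dotProduct, Finset.mul_sum]
    rw [sub_eq_add_neg]
    congr 2
    · exact Finset.sum_congr rfl fun j _ => by ring
    · exact Finset.sum_congr rfl fun k _ => by ring
  rw [hrepr]
  -- smoothness of the pieces
  have hu : ∀ j : Fin s, ContDiff ℝ (⊤:ℕ∞) (fun h : ℝ => deriv φ (t + c j * h)) := fun j =>
    hdφ.comp (contDiff_const.add (contDiff_const.mul contDiff_id))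
  have hfj : ∀ j : Fin s, ContDiff ℝ (⊤:ℕ∞) (fun h : ℝ => A i j * (h * deriv φ (t + c j * h))) :=
    fun j => contDiff_const.mul (contDiff_id.mul (hu j))
  have hPk : ∀ k : ℕ, ContDiff ℝ (⊤:ℕ∞)
      (fun h : ℝ => (qw k i * iteratedDeriv k φ t) * h ^ k) := fun k =>
    contDiff_const.mul (contDiff_id.pow k)
  have hF1 : ContDiff ℝ (⊤:ℕ∞) (fun h : ℝ =>
      ∑ j, (fun h : ℝ => A i j * (h * deriv φ (t + c j * h))) h) :=
    ContDiff.sum fun j _ => hfj j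
  have hF2 : ContDiff ℝ (⊤:ℕ∞) (fun h : ℝ => ∑ k ∈ Finset.range (p + 1),
      (fun h : ℝ => (qw k i * iteratedDeriv k φ t) * h ^ k) h) :=
    ContDiff.sum fun k _ => hPk k
  have hF3 : ContDiff ℝ (⊤:ℕ∞) (fun h : ℝ => -φ (t + c i * h)) :=
    (hφ'.comp (contDiff_const.add (contDiff_const.mul contDiff_id))).neg
  apply my_vanishing_isBigO
  · exact ((hF1.add hF2).add hF3)
  · intro m hm
    have hcast : ∀ (f : ℝ → ℝ), ContDiff ℝ (⊤:ℕ∞) f → ContDiff ℝ (m:ℕ∞) f := fun f hf =>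
      hf.of_le (by exact_mod_cast le_top)
    rw [my_iteratedDeriv_add (hcast _ (hF1.add hF2)) (hcast _ hF3),
      my_iteratedDeriv_add (hcast _ hF1) (hcast _ hF2),
      my_iteratedDeriv_sum _ _ (fun j _ => hfj j),
      my_iteratedDeriv_sum _ _ (fun k _ => hPk k)]
    -- third piece
    have e3 : iteratedDeriv m (fun h : ℝ => -φ (t + c i * h)) 0 =
        -(c i ^ m * iteratedDeriv m φ t) := by
      rw [iteratedDeriv_fun_neg, my_comp_affine φ hφ' t (c i) m]
    -- second piece
    have e2 : ∀ k, iteratedDeriv m (fun h : ℝ => (qw k i * iteratedDeriv k φ t) * h ^ k) 0 =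
        (qw k i * iteratedDeriv k φ t) * ((k.descFactorial m : ℝ) * (0:ℝ) ^ (k - m)) := by
      intro k
      rw [my_iteratedDeriv_const_mul' (f := fun h : ℝ => h ^ k) (by exact contDiff_id.pow k), my_iteratedDeriv_pow]
    have e2' : (∑ k ∈ Finset.range (p + 1),
        iteratedDeriv m (fun h : ℝ => (qw k i * iteratedDeriv k φ t) * h ^ k) 0) =
        (Nat.factorial m : ℝ) * qw m i * iteratedDeriv m φ t := by
      rw [Finset.sum_congr rfl fun k _ => e2 k]
      rw [Finset.sum_eq_single m]
      · rw [Nat.descFactorial_self, Nat.sub_self, pow_zero]; ring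
      · intro b _ hbm
        rcases lt_or_gt_of_ne hbm with hlt | hgt
        · rw [(Nat.descFactorial_eq_zero_iff_lt).mpr hlt]; simp
        · rw [zero_pow (Nat.sub_ne_zero_of_lt hgt)]; ring
      · intro hnot
        exact absurd (Finset.mem_range.mpr (Nat.lt_succ_of_le (hm.trans hqp))) hnot
    rw [e2', e3]
    -- first piece
    rcases Nat.eq_zero_or_pos m with rfl | hmpos
    · simp only [iteratedDeriv_zero]
      simp [hq0]
    · obtain ⟨m', rfl⟩ := Nat.exists_eq_succ_of_ne_zero hmpos.ne'
      have e1 : ∀ j : Fin s,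
          iteratedDeriv (m' + 1) (fun h : ℝ => A i j * (h * deriv φ (t + c j * h))) 0 =
          A i j * ((m' + 1 : ℝ) * (c j ^ m' * iteratedDeriv (m' + 1) φ t)) := by
        intro j
        rw [my_iteratedDeriv_const_mul' (f := fun h : ℝ => h * deriv φ (t + c j * h)) (by exact contDiff_id.mul (hu j))]
        rw [my_mul_id (hu j) m']
        simp only [zero_mul, add_zero, mul_zero, my_comp_affine (deriv φ) hdφ t (c j) m']
        rw [← iteratedDeriv_succ']
      rw [Finset.sum_congr rfl fun j _ => e1 j]
      have hso := hstageord (m' + 1) (Nat.le_add_left 1 m') hm i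
      simp only [Matrix.mulVec, dotProduct, Nat.add_sub_cancel] at hso
      have hexp : (∑ j, A i j * ((m' + 1 : ℝ) * (c j ^ m' * iteratedDeriv (m' + 1) φ t))) =
          ((m' + 1 : ℝ) * ∑ j, A i j * c j ^ m') * iteratedDeriv (m' + 1) φ t := by
        simp only [Finset.mul_sum, Finset.sum_mul]
        exact Finset.sum_congr rfl fun j _ => by ring
      rw [hexp]
      simp only [Nat.succ_eq_add_one] at *
      push_cast at hso ⊢
      linear_combination (iteratedDeriv (m' + 1) φ t) * hso

/-- IMEX-GLM (with `U = I`) applied to the Prothero–Robinson problem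
`y' = μ(y − φ(t)) + φ'(t)`: with stage errors `E^{[n]} = Y^{[n]} − φ^{[n]}`
and total external error `e_{n-1} = y^{[n-1]} − Σ_k q_k h^k φ^{(k)}(t_{n-1})`,
the stage equation yields `(I − hμÂ) E^{[n]} = e_{n-1} + R(h)` where
`R(h) = h A φ'^{[n]} + Σ_{k=0}^p q_k h^k φ^{(k)}(t_{n-1}) − φ^{[n]}` collects
the series `Σ_{k≥1} (k A c^{k-1} + k! q_k − c^k) (h^k/k!) φ^{(k)}(t_{n-1})`,
and `R(h) = O(h^{q+1})` if the explicit method has stage order `q`, i.e.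
`q₀ = 𝟙` and `k A c^{k-1} + k! q_k − c^k = 0` for `k = 1,…,q`. -/
theorem stmt11 (s p q : ℕ) (hqp : q ≤ p)
    (A Ahat : Matrix (Fin s) (Fin s) ℝ) (c : Fin s → ℝ) (qw : ℕ → Fin s → ℝ)
    (μ : ℝ) (hμ : μ < 0) (φ : ℝ → ℝ) (hφ : ContDiff ℝ (⊤ : ℕ∞) φ)
    (hq0 : qw 0 = fun _ => (1 : ℝ))
    (hstageord : ∀ k, 1 ≤ k → k ≤ q → ∀ i,
      (k : ℝ) * A.mulVec (fun j => c j ^ (k - 1)) i +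
        (Nat.factorial k : ℝ) * qw k i - c i ^ k = 0)
    (t : ℝ) (Y yin : ℝ → Fin s → ℝ)
    (hstageEq : ∀ h : ℝ, Y h =
      h • A.mulVec (fun i => deriv φ (t + c i * h)) +
        (h * μ) • Ahat.mulVec (fun i => Y h i - φ (t + c i * h)) + yin h) :
    (∀ h : ℝ,
      ((1 : Matrix (Fin s) (Fin s) ℝ) - (h * μ) • Ahat).mulVec
          (fun i => Y h i - φ (t + c i * h)) =
        (fun i => yin h i - ∑ k ∈ Finset.range (p + 1),
            qw k i * h ^ k * iteratedDeriv k φ t) +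
          fun i => h * A.mulVec (fun j => deriv φ (t + c j * h)) i +
            (∑ k ∈ Finset.range (p + 1), qw k i * h ^ k * iteratedDeriv k φ t) -
            φ (t + c i * h)) ∧
    (fun h : ℝ => fun i =>
        h * A.mulVec (fun j => deriv φ (t + c j * h)) i +
          (∑ k ∈ Finset.range (p + 1), qw k i * h ^ k * iteratedDeriv k φ t) -
          φ (t + c i * h))
      =O[𝓝 0] fun h : ℝ => h ^ (q + 1) := by
  constructor
  · intro h
    funext i
    have hY := congrFun (hstageEq h) i
    simp only [Pi.add_apply, Pi.smul_apply, smul_eq_mul] at hY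
    rw [Matrix.sub_mulVec, Matrix.one_mulVec, Matrix.smul_mulVec]
    simp only [Pi.sub_apply, Pi.smul_apply, Pi.add_apply, smul_eq_mul]
    rw [hY]
    ring
  · exact stmt11' s p q hqp A c qw φ hφ hq0 hstageord t
end
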